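/- If 0 ≤ ρ_S < 1, 0 ≤ ρ_G < 1 and α > 0, then the stationary distribution of the buffer-occupancy Markov chain is unique: if σ is any vector on {0,…,L} with σ(i) ≥ 0 for all i, Σ_{i=0}^{L} σ(i) = 1, and Σ_{i=0}^{L} σ(i)·M(i,j) = σ(j) for all j, then σ(i) = π(i) for every i. -/

import Mathlib

/-!
Every row of `M` sums to one, so a stationary vector `σ` has zero net probability flow across
any cut of the state space. Since `M` is tridiagonal, the cut between `{0,…,k}` and `{k+1,…,L}`
is crossed only by the edge `k ↔ k+1`, which gives detailed balance
`σ(k+1) · q = σ(k) · M(k,k+1)`. As `q ≠ 0`, this determines `σ` as `σ(0)` times the unnormalised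
weights `π(i)/π(0)`, and the normalisation `∑ σ = 1` forces `σ(0) = π(0)`.
-/

/-- The buffer-occupancy Markov chain transition matrix on states `{0,…,L}`. -/
noncomputable def Mmat (L : ℕ) (ρS ρG α : ℝ) :
    Matrix (Fin (L + 1)) (Fin (L + 1)) ℝ :=
  Matrix.of fun i j =>
    if i.val = 0 then
      -- empty buffer
      if j.val = 0 then ρS else if j.val = 1 then 1 - ρS else 0
    else if i.val = L then
      -- full buffer
      if j.val + 1 = L then α * (1 - ρG) / (1 + α)
      else if j.val = L then (1 + α * ρG) / (1 + α)
      else 0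
    else
      -- interior states
      if j.val + 1 = i.val then α * (1 - ρG) / (1 + α)
      else if j.val = i.val then (ρS + α * ρG) / (1 + α)
      else if j.val = i.val + 1 then (1 - ρS) / (1 + α)
      else 0

/-- The candidate stationary distribution `π` of the buffer-occupancy Markov chain. -/
noncomputable def piv (L : ℕ) (ρS ρG α : ℝ) : ℕ → ℝ := fun i =>
  let p : ℝ := (1 - ρS) / (1 + α)
  let q : ℝ := α * (1 - ρG) / (1 + α)
  let π0 : ℝ := 1 / (1 + (1 - ρS) * ∑ k ∈ Finset.Icc 1 L, p ^ (k - 1) / q ^ k)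
  if i = 0 then π0 else p ^ (i - 1) / q ^ i * (1 - ρS) * π0

open Finset Matrix

theorem Fintype.sum_eq_add_add {ι M : Type*} [Fintype ι] [DecidableEq ι] [AddCommMonoid M]
    {f : ι → M} (a b c : ι) (hab : a ≠ b) (hac : a ≠ c) (hbc : b ≠ c)
    (h : ∀ x, x ≠ a → x ≠ b → x ≠ c → f x = 0) :
    ∑ x, f x = f a + f b + f c := by
  rw [← Finset.sum_subset (subset_univ {a, b, c}) fun x _ hx => by simp_all,
    Finset.sum_insert (by simp [hab, hac]), Finset.sum_pair hbc, add_assoc]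

namespace Matrix

variable {ι R : Type*} [Fintype ι] [Ring R] {M : Matrix ι ι R} {σ : ι → R}

theorem sum_flow_eq_zero_of_vecMul_eq (hrow : ∀ i, ∑ j, M i j = 1) (hσ : σ ᵥ* M = σ) (c : ι) :
    ∑ i, (σ i * M i c - σ c * M c i) = 0 := by
  rw [sum_sub_distrib, ← mul_sum, hrow, mul_one, sub_eq_zero]
  exact congrFun hσ c

theorem sum_cut_flow_eq_zero_of_vecMul_eq [DecidableEq ι] (hrow : ∀ i, ∑ j, M i j = 1)
    (hσ : σ ᵥ* M = σ) (S : Finset ι) :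
    ∑ c ∈ S, ∑ i ∈ Sᶜ, (σ i * M i c - σ c * M c i) = 0 := by
  have hinner : ∑ c ∈ S, ∑ i ∈ S, (σ i * M i c - σ c * M c i) = 0 := by
    simp only [sum_sub_distrib]
    rw [sum_comm, sub_self]
  have htotal : ∑ c ∈ S, ∑ i, (σ i * M i c - σ c * M c i) = 0 :=
    sum_eq_zero fun c _ => sum_flow_eq_zero_of_vecMul_eq hrow hσ c
  simpa only [← sum_add_sum_compl S, sum_add_distrib, hinner, zero_add] using htotal

theorem detailed_balance_of_tridiagonal {n : ℕ} {M : Matrix (Fin (n + 1)) (Fin (n + 1)) R}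
    {σ : Fin (n + 1) → R} (htri : ∀ i j : Fin (n + 1), (i : ℕ) + 1 < j ∨ (j : ℕ) + 1 < i → M i j = 0)
    (hrow : ∀ i, ∑ j, M i j = 1) (hσ : σ ᵥ* M = σ) (k : Fin n) :
    σ k.succ * M k.succ k.castSucc = σ k.castSucc * M k.castSucc k.succ := by
  have hcut := sum_cut_flow_eq_zero_of_vecMul_eq hrow hσ (Iic k.castSucc)
  have hfar : ∀ c i : Fin (n + 1), (c : ℕ) + 1 < i → σ i * M i c - σ c * M c i = 0 := by
    intro c i h
    rw [htri i c (Or.inr h), htri c i (Or.inl h), mul_zero, mul_zero, sub_zero]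
  -- only the edge `k+1 → k` crosses the cut `Iic k`
  rw [sum_eq_single k.castSucc, sum_eq_single k.succ] at hcut
  · exact sub_eq_zero.mp hcut
  · intro i hi hne
    simp only [mem_compl, mem_Iic, not_le, Fin.lt_def, Fin.val_castSucc] at hi
    have : (i : ℕ) ≠ k + 1 := fun h => hne (Fin.ext h)
    exact hfar _ _ (by simp only [Fin.val_castSucc]; omega)
  · simp [Fin.le_def]
  · intro c hc hne
    simp only [mem_Iic, Fin.le_def, Fin.val_castSucc] at hc
    have : (c : ℕ) ≠ k := fun h => hne (Fin.ext h)
    refine sum_eq_zero fun i hi => hfar _ _ ?_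
    simp only [mem_compl, mem_Iic, not_le, Fin.lt_def, Fin.val_castSucc] at hi
    omega
  · simp

end Matrix

section BufferChain

variable {L : ℕ} {ρS ρG α : ℝ}

theorem Mmat_eq_zero {i j : Fin (L + 1)} (h : (i : ℕ) + 1 < j ∨ (j : ℕ) + 1 < i) :
    Mmat L ρS ρG α i j = 0 := by
  simp only [Mmat, of_apply]
  split_ifs <;> first | rfl | omega

theorem Mmat_zero_zero {i j : Fin (L + 1)} (hi : (i : ℕ) = 0) (hj : (j : ℕ) = 0) :
    Mmat L ρS ρG α i j = ρS := by
  simp only [Mmat, of_apply, hi, hj, if_pos]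

theorem Mmat_zero_one {i j : Fin (L + 1)} (hi : (i : ℕ) = 0) (hj : (j : ℕ) = 1) :
    Mmat L ρS ρG α i j = 1 - ρS := by
  simp only [Mmat, of_apply, hi, hj, if_pos, one_ne_zero, if_false]

theorem Mmat_of_eq_succ {i j : Fin (L + 1)} (h : (j : ℕ) = i + 1) (hi : (i : ℕ) ≠ 0) :
    Mmat L ρS ρG α i j = (1 - ρS) / (1 + α) := by
  simp only [Mmat, of_apply]
  split_ifs <;> first | rfl | omega

theorem Mmat_of_succ_eq {i j : Fin (L + 1)} (h : (j : ℕ) + 1 = i) :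
    Mmat L ρS ρG α i j = α * (1 - ρG) / (1 + α) := by
  simp only [Mmat, of_apply]
  split_ifs <;> first | rfl | omega

theorem Mmat_self {i : Fin (L + 1)} (h0 : (i : ℕ) ≠ 0) (hL : (i : ℕ) ≠ L) :
    Mmat L ρS ρG α i i = (ρS + α * ρG) / (1 + α) := by
  simp only [Mmat, of_apply, h0, hL, if_false, Nat.succ_ne_self, if_pos]

theorem Mmat_last_last (hL : L ≠ 0) :
    Mmat L ρS ρG α (Fin.last L) (Fin.last L) = (1 + α * ρG) / (1 + α) := by
  simp [Mmat, hL]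

theorem Mmat_row_sum (hL : 1 ≤ L) (hα : 1 + α ≠ 0) (i : Fin (L + 1)) :
    ∑ j, Mmat L ρS ρG α i j = 1 := by
  have hne {a b : Fin (L + 1)} (h : a ≠ b) : (a : ℕ) ≠ b := Fin.val_ne_of_ne h
  rcases Nat.eq_zero_or_pos i with h0 | hpos
  · rw [Fintype.sum_eq_add i ⟨1, by omega⟩ (Fin.ne_of_val_ne (show (i : ℕ) ≠ 1 by omega))
      fun j hj => Mmat_eq_zero (by
        have : (j : ℕ) ≠ i := hne hj.1; have : (j : ℕ) ≠ 1 := hne hj.2; omega),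
      Mmat_zero_zero h0 h0, Mmat_zero_one h0 rfl]
    ring
  rcases eq_or_ne (i : ℕ) L with hlast | hint
  · obtain rfl : i = Fin.last L := Fin.ext hlast
    rw [Fintype.sum_eq_add ⟨L - 1, by omega⟩ (Fin.last L)
      (Fin.ne_of_val_ne (show L - 1 ≠ L by omega))
      fun j hj => Mmat_eq_zero (by
        have : (j : ℕ) ≠ L - 1 := hne hj.1; have : (j : ℕ) ≠ L := hne hj.2; omega),
      Mmat_of_succ_eq (show L - 1 + 1 = L by omega), Mmat_last_last (by omega)]
    field_simp
    ring
  · rw [Fintype.sum_eq_add_add ⟨i - 1, by omega⟩ i ⟨i + 1, by omega⟩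
      (Fin.ne_of_val_ne (show (i : ℕ) - 1 ≠ i by omega))
      (Fin.ne_of_val_ne (show (i : ℕ) - 1 ≠ i + 1 by omega))
      (Fin.ne_of_val_ne (show (i : ℕ) ≠ i + 1 by omega))
      fun j h1 h2 h3 => Mmat_eq_zero (by
        have : (j : ℕ) ≠ i - 1 := hne h1; have : (j : ℕ) ≠ i := hne h2
        have : (j : ℕ) ≠ i + 1 := hne h3; omega),
      Mmat_of_succ_eq (show (i : ℕ) - 1 + 1 = i by omega), Mmat_self hpos.ne' hint, Mmat_of_eq_succ rfl hpos.ne']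
    field_simp
    ring

theorem Mmat_detailed_balance (hL : 1 ≤ L) (hα : 1 + α ≠ 0) {σ : Fin (L + 1) → ℝ}
    (hσ : σ ᵥ* Mmat L ρS ρG α = σ) (k : Fin L) :
    σ k.succ * (α * (1 - ρG) / (1 + α)) =
      σ k.castSucc * (if (k : ℕ) = 0 then 1 - ρS else (1 - ρS) / (1 + α)) := by
  rw [← Mmat_of_succ_eq (i := k.succ) (j := k.castSucc) (by simp),
    detailed_balance_of_tridiagonal (fun _ _ => Mmat_eq_zero) (Mmat_row_sum hL hα) hσ k]
  split_ifs with hk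
  · rw [Mmat_zero_one hk (by simp [hk])]
  · rw [Mmat_of_eq_succ (by simp) hk]

noncomputable def pivWeight (ρS ρG α : ℝ) (i : ℕ) : ℝ :=
  if i = 0 then 1 else (1 - ρS) * ((1 - ρS) / (1 + α)) ^ (i - 1) / (α * (1 - ρG) / (1 + α)) ^ i

theorem pivWeight_succ_mul (hq : α * (1 - ρG) / (1 + α) ≠ 0) (k : ℕ) :
    pivWeight ρS ρG α (k + 1) * (α * (1 - ρG) / (1 + α)) =
      pivWeight ρS ρG α k * (if k = 0 then 1 - ρS else (1 - ρS) / (1 + α)) := by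
  rcases k with _ | k
  · simp [pivWeight, div_mul_cancel₀ _ hq]
  · simp only [pivWeight, Nat.add_sub_cancel, Nat.succ_ne_zero, if_false, pow_succ]
    field_simp

theorem piv_eq_pivWeight_div (i : ℕ) :
    piv L ρS ρG α i = pivWeight ρS ρG α i / ∑ k ∈ range (L + 1), pivWeight ρS ρG α k := by
  have hsum : ∑ k ∈ range (L + 1), pivWeight ρS ρG α k = 1 + (1 - ρS) *
      ∑ k ∈ Icc 1 L, ((1 - ρS) / (1 + α)) ^ (k - 1) / (α * (1 - ρG) / (1 + α)) ^ k := by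
    rw [range_eq_Ico, sum_eq_sum_Ico_succ_bot L.succ_pos, ← Ico_add_one_right_eq_Icc, mul_sum]
    refine congrArg₂ _ (by simp [pivWeight]) (sum_congr rfl fun k hk => ?_)
    have : k ≠ 0 := by simp at hk; omega
    simp only [pivWeight, this, if_false]
    ring
  rw [hsum]
  unfold piv
  split_ifs with hi
  · simp [pivWeight, hi]
  · simp only [pivWeight, hi, if_false]
    ring

theorem Mmat_stationary_eq_mul_pivWeight (hL : 1 ≤ L) (hq : α * (1 - ρG) / (1 + α) ≠ 0)
    {σ : Fin (L + 1) → ℝ} (hσ : σ ᵥ* Mmat L ρS ρG α = σ) (i : Fin (L + 1)) :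
    σ i = σ 0 * pivWeight ρS ρG α i := by
  have hα : 1 + α ≠ 0 := fun h => hq (by rw [h, div_zero])
  induction i using Fin.induction with
  | zero => simp [pivWeight]
  | succ k ih =>
    apply mul_right_cancel₀ hq
    rw [Mmat_detailed_balance hL hα hσ k, ih, Fin.val_succ, Fin.val_castSucc, mul_assoc,
      mul_assoc, pivWeight_succ_mul hq]

end BufferChain

theorem stmt8_general (L : ℕ) (hL : 1 ≤ L) (ρS ρG α : ℝ) (hG1 : ρG < 1) (hα : 0 < α) :
    ∀ σ : Fin (L + 1) → ℝ,
      (∀ i : Fin (L + 1), 0 ≤ σ i) →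
      (∑ i : Fin (L + 1), σ i = 1) →
      (∀ j : Fin (L + 1), ∑ i : Fin (L + 1), σ i * Mmat L ρS ρG α i j = σ j) →
      ∀ i : Fin (L + 1), σ i = piv L ρS ρG α i.val := by
  intro σ _ hsum hbal i
  have hq : α * (1 - ρG) / (1 + α) ≠ 0 :=
    (div_pos (mul_pos hα (sub_pos.2 hG1)) (by linarith)).ne'
  have hprop := Mmat_stationary_eq_mul_pivWeight hL hq (funext hbal)
  have hnorm : σ 0 * ∑ k ∈ range (L + 1), pivWeight ρS ρG α k = 1 := by
    rw [mul_sum, ← Fin.sum_univ_eq_sum_range (fun k => σ 0 * pivWeight ρS ρG α k), ← hsum]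
    exact sum_congr rfl fun j _ => (hprop j).symm
  rw [hprop i, piv_eq_pivWeight_div, eq_inv_of_mul_eq_one_left hnorm, div_eq_inv_mul]

/-- the stationary distribution of the buffer-occupancy chain is unique:
any nonnegative vector `σ` summing to 1 with `σM = σ` coincides with `π`. -/
theorem stmt8 (L : ℕ) (hL : 1 ≤ L) (ρS ρG α : ℝ)
    (hS0 : 0 ≤ ρS) (hS1 : ρS < 1) (hG0 : 0 ≤ ρG) (hG1 : ρG < 1) (hα : 0 < α) :
    ∀ σ : Fin (L + 1) → ℝ,
      (∀ i : Fin (L + 1), 0 ≤ σ i) →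
      (∑ i : Fin (L + 1), σ i = 1) →
      (∀ j : Fin (L + 1), ∑ i : Fin (L + 1), σ i * Mmat L ρS ρG α i j = σ j) →
      ∀ i : Fin (L + 1), σ i = piv L ρS ρG α i.val :=
  stmt8_general L hL ρS ρG α hG1 hα
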